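/- Let F be a decomposable family and X a maximal itemset with distinct items x, y ∈ X such that split(X,x,y) is legal. Then the number of itemsets removed from F by the split equals 2^{|X|−2}; i.e., |F| − |F'| = 2^{|X|−2} where F' is the family after the split. -/

import Mathlib

open scoped Classical

variable {A : Type*} [Fintype A] [DecidableEq A]

/-- A family of itemsets is downward closed if it is closed under taking subsets. -/
def DownwardClosed (F : Finset (Finset A)) : Prop :=
  ∀ X ∈ F, ∀ Y ⊆ X, Y ∈ F

/-- The maximal itemsets of a family. -/
def maximalSets (F : Finset (Finset A)) : Finset (Finset A) :=
  F.filter fun X => ∀ Y ∈ F, X ⊆ Y → X = Y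

/-- A junction tree for a family `F`: a tree on the maximal itemsets of `F` such that
for any two nodes sharing an item `a`, every node on the (unique) path between them
contains `a` (running intersection property). -/
def IsJunctionTree (F : Finset (Finset A))
    (G : SimpleGraph {X // X ∈ maximalSets F}) : Prop :=
  G.IsTree ∧
    ∀ (X Y : {X // X ∈ maximalSets F}) (a : A), a ∈ X.1 → a ∈ Y.1 →
      ∀ (p : G.Walk X Y), p.IsPath → ∀ Z ∈ p.support, a ∈ Z.1

/-- A family is decomposable if it admits a junction tree. -/
def Decomposable (F : Finset (Finset A)) : Prop :=
  ∃ G : SimpleGraph {X // X ∈ maximalSets F}, IsJunctionTree F G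

/-- The collection {X − S : X ∈ max(F), S ⊊ X}. -/
def baseFam (F : Finset (Finset A)) (S : Finset A) : Finset (Finset A) :=
  ((maximalSets F).filter fun X => S ⊂ X).image fun X => X \ S

/-- The union of the connected component of `U` in the intersection graph on `baseFam F S`. -/
noncomputable def component (F : Finset (Finset A)) (S U : Finset A) : Finset A :=
  ((baseFam F S).filter fun V =>
      Relation.ReflTransGen
        (fun P Q => P ∈ baseFam F S ∧ Q ∈ baseFam F S ∧ (P ∩ Q).Nonempty) U V).sup id

/-- The reduced family R(F;S): obtained from {X − S : X ∈ max(F), S ⊊ X} by repeatedly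
replacing intersecting members by their union until all members are pairwise disjoint;
equivalently, the unions of the connected components of the intersection graph. -/
noncomputable def reducedFamily (F : Finset (Finset A)) (S : Finset A) : Set (Finset A) :=
  {Z | ∃ U ∈ baseFam F S, Z = component F S U}

/-!
Every member of `F` containing `x` and `y` lies below a maximal set, which legality forces to
be `X`; conversely downward closure puts every set between `{x, y}` and `X` into `F`. So the
removed sets form the Boolean interval `[{x, y}, X]`, which has `2 ^ (|X| - 2)` elements.
-/

theorem Maximal.mem_maximalSets {F : Finset (Finset A)} {Y : Finset A} (hY : Maximal (· ∈ F) Y) :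
    Y ∈ maximalSets F :=
  Finset.mem_filter.mpr ⟨hY.prop, fun _ hZ hYZ => le_antisymm hYZ (hY.le_of_ge hZ hYZ)⟩

theorem exists_mem_maximalSets_superset {F : Finset (Finset A)} {Z : Finset A} (hZ : Z ∈ F) :
    ∃ Y ∈ maximalSets F, Z ⊆ Y := by
  obtain ⟨Y, hZY, hY⟩ := F.exists_le_maximal hZ
  exact ⟨Y, hY.mem_maximalSets, hZY⟩

theorem DownwardClosed.filter_superset_eq_Icc {F : Finset (Finset A)} (hdc : DownwardClosed F)
    {X T : Finset A} (hX : X ∈ maximalSets F)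
    (hunique : ∀ Y ∈ maximalSets F, T ⊆ Y → Y = X) :
    F.filter (T ⊆ ·) = Finset.Icc T X := by
  ext Z
  rw [Finset.mem_filter, Finset.mem_Icc]
  constructor
  · rintro ⟨hZ, hTZ⟩
    obtain ⟨Y, hY, hZY⟩ := exists_mem_maximalSets_superset hZ
    exact ⟨hTZ, hunique Y hY (hTZ.trans hZY) ▸ hZY⟩
  · rintro ⟨hTZ, hZX⟩
    exact ⟨hdc X (Finset.mem_filter.mp hX).1 Z hZX, hTZ⟩

theorem split_removes_count_general (F : Finset (Finset A))
    (hdc : DownwardClosed F)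
    (X : Finset A) (hX : X ∈ maximalSets F) (x y : A)
    (hx : x ∈ X) (hy : y ∈ X) (hxy : x ≠ y)
    (hlegal : ∀ Y ∈ maximalSets F, x ∈ Y → y ∈ Y → Y = X) :
    F.card - (F.filter fun Z => ¬(x ∈ Z ∧ y ∈ Z)).card = 2 ^ (X.card - 2) := by
  have hpair (Z : Finset A) : {x, y} ⊆ Z ↔ x ∈ Z ∧ y ∈ Z := by
    rw [Finset.insert_subset_iff, Finset.singleton_subset_iff]
  have hremoved : F.filter (fun Z => x ∈ Z ∧ y ∈ Z) = Finset.Icc {x, y} X := by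
    simp_rw [← hpair]
    exact hdc.filter_superset_eq_Icc hX fun Y hY h => ((hpair Y).mp h).elim (hlegal Y hY)
  have hcard := F.card_filter_add_card_filter_not fun Z => x ∈ Z ∧ y ∈ Z
  rw [hremoved, Finset.card_Icc_finset ((hpair X).mpr ⟨hx, hy⟩),
    Finset.card_pair hxy] at hcard
  rw [← hcard]
  -- the two `¬`-filters differ only in their `Decidable` instances
  convert Nat.add_sub_cancel_right _ _

/-- If `split(X,x,y)` is legal (i.e. `X` is the unique maximal itemset containing both
`x` and `y`), then the number of itemsets removed from `F` by the split equals
`2^(|X|−2)`. -/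
theorem split_removes_count (F : Finset (Finset A))
    (hdc : DownwardClosed F) (hF : Decomposable F)
    (X : Finset A) (hX : X ∈ maximalSets F) (x y : A)
    (hx : x ∈ X) (hy : y ∈ X) (hxy : x ≠ y)
    (hlegal : ∀ Y ∈ maximalSets F, x ∈ Y → y ∈ Y → Y = X) :
    F.card - (F.filter fun Z => ¬(x ∈ Z ∧ y ∈ Z)).card = 2 ^ (X.card - 2) :=
  split_removes_count_general F hdc X hX x y hx hy hxy hlegal
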